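/- For every integer n ≥ 5, the product of the first n primes exceeds the cube of the (n+1)-th prime: p_1 · p_2 · ⋯ · p_n > p_{n+1}^3. -/
import Mathlib

lemma nth_prime_val {m c : ℕ} (hm : Nat.Prime m) (hc : Nat.count Nat.Prime m = c) :
    Nat.nth Nat.Prime c = m := by
  have := Nat.nth_count (p := Nat.Prime) hm
  rwa [hc] at this

lemma nth_prime_succ_le (k : ℕ) : Nat.nth Nat.Prime (k + 1) ≤ 2 * Nat.nth Nat.Prime k := by
  have hpos : Nat.nth Nat.Prime k ≠ 0 :=
    (Nat.nth_mem_of_infinite Nat.infinite_setOf_prime k).pos.ne'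
  obtain ⟨p, hp, hlt, hle⟩ := Nat.exists_prime_lt_and_le_two_mul _ hpos
  refine le_trans ?_ hle
  by_contra h
  exact absurd (Nat.le_nth_of_lt_nth_succ (not_le.mp h) hp) (not_le.mpr hlt)

/-- Bonse's second inequality: for n ≥ 5, the product of the first n primes
exceeds the cube of the (n+1)-th prime. -/
theorem bonse_second (n : ℕ) (hn : 5 ≤ n) :
    (Nat.nth Nat.Prime n) ^ 3 < ∏ i ∈ Finset.range n, Nat.nth Nat.Prime i := by
  induction n, hn using Nat.le_induction with
  | base =>
    have h0 : Nat.nth Nat.Prime 0 = 2 := nth_prime_val (by norm_num) (by decide)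
    have h1 : Nat.nth Nat.Prime 1 = 3 := nth_prime_val (by norm_num) (by decide)
    have h2 : Nat.nth Nat.Prime 2 = 5 := nth_prime_val (by norm_num) (by decide)
    have h3 : Nat.nth Nat.Prime 3 = 7 := nth_prime_val (by norm_num) (by decide)
    have h4 : Nat.nth Nat.Prime 4 = 11 := nth_prime_val (by norm_num) (by decide)
    have h5 : Nat.nth Nat.Prime 5 = 13 := nth_prime_val (by norm_num) (by decide)
    rw [Finset.prod_range_succ, Finset.prod_range_succ, Finset.prod_range_succ,
      Finset.prod_range_succ, Finset.prod_range_one, h0, h1, h2, h3, h4, h5]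
    norm_num
  | succ n hn ih =>
    have h5 : Nat.nth Nat.Prime 5 = 13 := nth_prime_val (by norm_num) (by decide)
    have hmono : 13 ≤ Nat.nth Nat.Prime n := by
      rw [← h5]
      exact (Nat.nth_le_nth Nat.infinite_setOf_prime).mpr hn
    have hb := nth_prime_succ_le n
    rw [Finset.prod_range_succ]
    calc Nat.nth Nat.Prime (n + 1) ^ 3 ≤ (2 * Nat.nth Nat.Prime n) ^ 3 :=
          Nat.pow_le_pow_left hb 3
      _ = 8 * Nat.nth Nat.Prime n ^ 3 := by ring
      _ < Nat.nth Nat.Prime n ^ 3 * Nat.nth Nat.Prime n := by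
          have h3pos : 0 < Nat.nth Nat.Prime n ^ 3 :=
            pow_pos (by omega) 3
          calc 8 * Nat.nth Nat.Prime n ^ 3 < 13 * Nat.nth Nat.Prime n ^ 3 := by
                exact (Nat.mul_lt_mul_right h3pos).mpr (by norm_num)
            _ ≤ Nat.nth Nat.Prime n * Nat.nth Nat.Prime n ^ 3 :=
                Nat.mul_le_mul_right _ hmono
            _ = Nat.nth Nat.Prime n ^ 3 * Nat.nth Nat.Prime n := by ring
      _ ≤ (∏ i ∈ Finset.range n, Nat.nth Nat.Prime i) * Nat.nth Nat.Prime n := by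
          exact Nat.mul_le_mul_right _ ih.le
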